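/- Let α ∈ ℝ (possibly negative), 0 ≤ β ≤ 1, and let α₁, α₂ ∈ ℝ satisfy α₁ + α₂ = α with α₂ ∈ ℤ. Then there is a constant C = C(α, β) such that for every pair (z, h) ∈ ℂ² for which all the displayed powers are defined (in particular z ≠ 0 and z + h ≠ 0 when negative exponents occur), one has | |z+h|^{α₁}(z+h)^{α₂} − |z|^{α₁} z^{α₂} | ≤ C |h|^{β} ( |z+h|^{α−β} + |z|^{α−β} ). -/

import Mathlib

/-!
For `‖h‖ ≤ ‖z‖ / 2` the closed ball of radius `‖h‖` about `z` lies in the annulus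
`‖z‖ / 2 ≤ ‖w‖ ≤ 2 ‖z‖`, on which the real derivative of `w ↦ |w|^{α₁} w^{α₂}` is
`O(‖z‖^{α - 1})`; the mean value inequality bounds the difference by `O(‖z‖^{α - 1} ‖h‖)`, and
`‖h‖ ≤ ‖z‖` trades `‖h‖^{1 - β}` for `‖z‖^{1 - β}`. For `‖h‖ > ‖z‖ / 2` both `‖z‖` and
`‖z + h‖` are at most `3 ‖h‖`, so each term alone is bounded by
`‖w‖^α = ‖w‖^β ‖w‖^{α - β} ≤ 3 ‖h‖^β ‖w‖^{α - β}`.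
-/

open MeasureTheory Real Set Filter
open scoped FourierTransform ENNReal NNReal Topology

noncomputable section

/-- `ℝ^d` as a Euclidean space. -/
abbrev Rd (d : ℕ) : Type := EuclideanSpace ℝ (Fin d)

/-- The Bessel potential operator `⟨D⟩ˢ`, i.e. the Fourier multiplier with
symbol `(1 + ‖ξ‖²)^(s/2)`. -/
def besselPot (d : ℕ) (s : ℝ) (u : Rd d → ℂ) : Rd d → ℂ :=
  fun x => 𝓕⁻ (fun ξ : Rd d => ((((1 : ℝ) + ‖ξ‖ ^ 2) ^ (s / 2) : ℝ) : ℂ) * 𝓕 u ξ) x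

/-- The `W^{s,q}(ℝ^d)` Bessel-potential Sobolev norm `‖⟨D⟩ˢ u‖_{L^q}`. -/
def sobolevNorm (d : ℕ) (s q : ℝ) (u : Rd d → ℂ) : ℝ≥0∞ :=
  eLpNorm (besselPot d s u) (ENNReal.ofReal q) volume

/-- Membership in the Sobolev space `W^{s,q}(ℝ^d)`. -/
def MemSobolev (d : ℕ) (s q : ℝ) (u : Rd d → ℂ) : Prop :=
  AEStronglyMeasurable u (volume : Measure (Rd d)) ∧ sobolevNorm d s q u ≠ ⊤

/-- `u : t ↦ u t` is a continuous map from `J ⊆ ℝ` into `W^{s,q}(ℝ^d)`. -/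
def ContInSobolev (d : ℕ) (s q : ℝ) (J : Set ℝ) (u : ℝ → Rd d → ℂ) : Prop :=
  (∀ t ∈ J, MemSobolev d s q (u t)) ∧
  ∀ t ∈ J, ∀ ε : ℝ, 0 < ε → ∃ δ : ℝ, 0 < δ ∧ ∀ t' ∈ J, |t' - t| < δ →
    sobolevNorm d s q (fun x => u t' x - u t x) < ENNReal.ofReal ε

/-- The power nonlinearity `μ |z|^(p-1) z`. -/
def nlPow (p μ : ℝ) (z : ℂ) : ℂ := (μ : ℂ) * ((‖z‖ ^ (p - 1) : ℝ) : ℂ) * z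

/-- The Schrödinger group `e^{-itΔ}`, as a Fourier multiplier. -/
def schrodingerGroup (d : ℕ) (t : ℝ) (u : Rd d → ℂ) : Rd d → ℂ :=
  if t = 0 then u
  else fun x =>
    𝓕⁻ (fun ξ : Rd d => Complex.exp (Complex.I * (4 * π ^ 2 * t * ‖ξ‖ ^ 2)) * 𝓕 u ξ) x

/-- The Gaussian heat kernel `(4πt)^(-d/2) e^{-|x|²/(4t)}`. -/
def heatKernel (d : ℕ) (t : ℝ) (x : Rd d) : ℝ :=
  (4 * π * t) ^ (-(d : ℝ) / 2) * Real.exp (-‖x‖ ^ 2 / (4 * t))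

/-- The heat semigroup `e^{tΔ}`, given by convolution with the Gaussian kernel. -/
def heatSemigroup (d : ℕ) (t : ℝ) (u : Rd d → ℂ) : Rd d → ℂ :=
  if t = 0 then u else fun x => ∫ y, (heatKernel d t (x - y) : ℂ) * u y

/-- Duhamel (integral) formulation of the nonlinear Schrödinger equation
`i∂_t u - Δu = μ |u|^{p-1} u`, `u(0) = u₀`, on the time set `J`. -/
def IsNLSSolutionOn (d : ℕ) (p μ : ℝ) (u₀ : Rd d → ℂ) (J : Set ℝ) (u : ℝ → Rd d → ℂ) : Prop :=
  u 0 =ᵐ[volume] u₀ ∧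
  ∀ t ∈ J, u t =ᵐ[volume] fun x =>
    schrodingerGroup d t u₀ x -
      Complex.I * ∫ s in (0:ℝ)..t, schrodingerGroup d (t - s) (fun y => nlPow p μ (u s y)) x

/-- Duhamel (integral) formulation of the nonlinear heat equation
`∂_t u - Δu = μ |u|^{p-1} u`, `u(0) = u₀`, on the time set `J`. -/
def IsNLHSolutionOn (d : ℕ) (p μ : ℝ) (u₀ : Rd d → ℂ) (J : Set ℝ) (u : ℝ → Rd d → ℂ) : Prop :=
  u 0 =ᵐ[volume] u₀ ∧
  ∀ t ∈ J, u t =ᵐ[volume] fun x =>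
    heatSemigroup d t u₀ x +
      ∫ s in (0:ℝ)..t, heatSemigroup d (t - s) (fun y => nlPow p μ (u s y)) x

/-! ### One-dimensional versions, for functions on `ℝ` -/

/-- The one-dimensional Bessel potential operator `⟨D⟩ˢ`. -/
def besselPot1 (s : ℝ) (u : ℝ → ℂ) : ℝ → ℂ :=
  fun x => 𝓕⁻ (fun ξ : ℝ => ((((1 : ℝ) + ξ ^ 2) ^ (s / 2) : ℝ) : ℂ) * 𝓕 u ξ) x

/-- The one-dimensional `W^{s,q}(ℝ)` Sobolev norm. -/
def sobolevNorm1 (s q : ℝ) (u : ℝ → ℂ) : ℝ≥0∞ :=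
  eLpNorm (besselPot1 s u) (ENNReal.ofReal q) volume

/-- Membership in `W^{s,q}(ℝ)`. -/
def MemSobolev1 (s q : ℝ) (u : ℝ → ℂ) : Prop :=
  AEStronglyMeasurable u (volume : Measure ℝ) ∧ sobolevNorm1 s q u ≠ ⊤

/-- Continuity in time with values in `W^{s,q}(ℝ)`. -/
def ContInSobolev1 (s q : ℝ) (J : Set ℝ) (u : ℝ → ℝ → ℂ) : Prop :=
  (∀ t ∈ J, MemSobolev1 s q (u t)) ∧
  ∀ t ∈ J, ∀ ε : ℝ, 0 < ε → ∃ δ : ℝ, 0 < δ ∧ ∀ t' ∈ J, |t' - t| < δ →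
    sobolevNorm1 s q (fun x => u t' x - u t x) < ENNReal.ofReal ε

/-- The one-dimensional Schrödinger group `e^{-it∂_x²}`. -/
def schrodingerGroup1 (t : ℝ) (u : ℝ → ℂ) : ℝ → ℂ :=
  if t = 0 then u
  else fun x => 𝓕⁻ (fun ξ : ℝ => Complex.exp (Complex.I * (4 * π ^ 2 * t * ξ ^ 2)) * 𝓕 u ξ) x

/-- Duhamel formulation of the one-dimensional NLS. -/
def IsNLSSolutionOn1 (p μ : ℝ) (u₀ : ℝ → ℂ) (J : Set ℝ) (u : ℝ → ℝ → ℂ) : Prop :=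
  u 0 =ᵐ[volume] u₀ ∧
  ∀ t ∈ J, u t =ᵐ[volume] fun x =>
    schrodingerGroup1 t u₀ x -
      Complex.I * ∫ s in (0:ℝ)..t, schrodingerGroup1 (t - s) (fun y => nlPow p μ (u s y)) x

end

section
variable {E : Type*} [NormedAddCommGroup E] [InnerProductSpace ℝ E]

theorem differentiableAt_norm_rpow_of_ne_zero (a : ℝ) {w : E} (hw : w ≠ 0) :
    DifferentiableAt ℝ (fun v : E => ‖v‖ ^ a) w :=
  (differentiableAt_id.norm ℝ hw).rpow_const (.inl (norm_ne_zero_iff.mpr hw))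

theorem norm_fderiv_norm_rpow_le_of_ne_zero (a : ℝ) {w : E} (hw : w ≠ 0) :
    ‖fderiv ℝ (fun v : E => ‖v‖ ^ a) w‖ ≤ |a| * ‖w‖ ^ (a - 1) := by
  have hw0 : 0 < ‖w‖ := norm_pos_iff.mpr hw
  have hnorm : ‖fderiv ℝ (fun v : E => ‖v‖) w‖ ≤ 1 := by
    simpa using norm_fderiv_le_of_lipschitz ℝ (lipschitzWith_one_norm (E := E)) (x₀ := w)
  have hdiff : DifferentiableAt ℝ (fun v : E => ‖v‖) w := differentiableAt_id.norm ℝ hw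
  have hderiv : HasFDerivAt (fun v : E => ‖v‖ ^ a)
      ((a * ‖w‖ ^ (a - 1)) • fderiv ℝ (fun v : E => ‖v‖) w) w :=
    (Real.hasDerivAt_rpow_const (.inl hw0.ne')).comp_hasFDerivAt w hdiff.hasFDerivAt
  rw [hderiv.fderiv, norm_smul, Real.norm_eq_abs, abs_mul, abs_of_pos (Real.rpow_pos_of_pos hw0 _)]
  exact mul_le_of_le_one_right (by positivity) hnorm

end

theorem norm_fderiv_zpow (n : ℤ) {w : ℂ} (hw : w ≠ 0) :
    ‖fderiv ℝ (fun v : ℂ => v ^ n) w‖ = |(n : ℝ)| * ‖w‖ ^ ((n : ℝ) - 1) := by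
  rw [((hasDerivAt_zpow n w (.inl hw)).hasFDerivAt.restrictScalars ℝ).fderiv,
    ContinuousLinearMap.norm_restrictScalars, ContinuousLinearMap.norm_toSpanSingleton,
    norm_mul, Complex.norm_intCast, norm_zpow, ← Real.rpow_intCast]
  push_cast; rfl

theorem rpow_le_two_rpow_abs_mul_rpow {a b : ℝ} (ha : 0 < a) (hab : a / 2 ≤ b) (hba : b ≤ 2 * a)
    (γ : ℝ) : b ^ γ ≤ 2 ^ |γ| * a ^ γ := by
  rcases le_or_gt 0 γ with hγ | hγ
  · calc b ^ γ ≤ (2 * a) ^ γ := by gcongr; linarith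
      _ = 2 ^ |γ| * a ^ γ := by rw [Real.mul_rpow zero_le_two ha.le, abs_of_nonneg hγ]
  · calc b ^ γ ≤ (a / 2) ^ γ := Real.rpow_le_rpow_of_nonpos (by positivity) hab hγ.le
      _ = 2 ^ |γ| * a ^ γ := by
        rw [Real.div_rpow ha.le zero_le_two, abs_of_neg hγ, Real.rpow_neg zero_le_two]
        ring

theorem rpow_sub_one_mul_le_rpow_mul_rpow_sub {r t β : ℝ} (ht : 0 ≤ t) (htr : t ≤ r) (hβ : β ≤ 1)
    (A : ℝ) : r ^ (A - 1) * t ≤ t ^ β * r ^ (A - β) := by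
  rcases ht.eq_or_lt with rfl | ht
  · rw [mul_zero]; exact mul_nonneg (Real.rpow_nonneg le_rfl _) (Real.rpow_nonneg htr _)
  have hr : 0 < r := ht.trans_le htr
  calc r ^ (A - 1) * t = t ^ β * (r ^ (A - 1) * t ^ (1 - β)) := by
        rw [mul_left_comm, ← Real.rpow_add ht, add_sub_cancel, Real.rpow_one]
    _ ≤ t ^ β * (r ^ (A - 1) * r ^ (1 - β)) := by gcongr
    _ = t ^ β * r ^ (A - β) := by rw [← Real.rpow_add hr, sub_add_sub_cancel]

theorem rpow_le_mul_rpow_mul_rpow_sub {r t c β : ℝ} (hr : 0 < r) (hc : 1 ≤ c) (hrt : r ≤ c * t)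
    (hβ₀ : 0 ≤ β) (hβ₁ : β ≤ 1) (A : ℝ) : r ^ A ≤ c * t ^ β * r ^ (A - β) := by
  have ht : 0 ≤ t := nonneg_of_mul_nonneg_right (hr.le.trans hrt) (by linarith)
  calc r ^ A = r ^ β * r ^ (A - β) := by rw [← Real.rpow_add hr, add_sub_cancel]
    _ ≤ (c * t) ^ β * r ^ (A - β) := by gcongr
    _ ≤ c * t ^ β * r ^ (A - β) := by
        rw [Real.mul_rpow (by linarith) ht]
        gcongr
        exact Real.rpow_le_self_of_one_le hc hβ₁

noncomputable def normRpowZpow (a : ℝ) (n : ℤ) (w : ℂ) : ℂ := ((‖w‖ ^ a : ℝ) : ℂ) * w ^ n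

section
variable (a : ℝ) (n : ℤ) {w : ℂ}

theorem normRpowZpow_eq_smul : normRpowZpow a n = fun w => ‖w‖ ^ a • w ^ n := by
  ext w; rw [normRpowZpow, Complex.real_smul]

theorem norm_normRpowZpow (hw : w ≠ 0) : ‖normRpowZpow a n w‖ = ‖w‖ ^ (a + n) := by
  rw [normRpowZpow, norm_mul, Complex.norm_real, Real.norm_eq_abs,
    abs_of_nonneg (by positivity), norm_zpow, ← Real.rpow_intCast,
    ← Real.rpow_add (norm_pos_iff.mpr hw)]

theorem differentiableAt_normRpowZpow (hw : w ≠ 0) : DifferentiableAt ℝ (normRpowZpow a n) w := by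
  rw [normRpowZpow_eq_smul]
  exact (differentiableAt_norm_rpow_of_ne_zero a hw).smul
    ((differentiableAt_zpow.mpr (.inl hw)).restrictScalars ℝ)

theorem norm_fderiv_normRpowZpow_le (hw : w ≠ 0) :
    ‖fderiv ℝ (normRpowZpow a n) w‖ ≤ (|a| + |(n : ℝ)|) * ‖w‖ ^ (a + n - 1) := by
  have hw0 : 0 < ‖w‖ := norm_pos_iff.mpr hw
  rw [normRpowZpow_eq_smul, fderiv_fun_smul (differentiableAt_norm_rpow_of_ne_zero a hw)
    ((differentiableAt_zpow.mpr (.inl hw)).restrictScalars ℝ)]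
  calc _ ≤ ‖w‖ ^ a * (|(n : ℝ)| * ‖w‖ ^ ((n : ℝ) - 1)) + |a| * ‖w‖ ^ (a - 1) * ‖w‖ ^ (n : ℝ) := by
        refine (norm_add_le _ _).trans (add_le_add ?_ ?_)
        · rw [norm_smul, Real.norm_eq_abs, abs_of_pos (by positivity), norm_fderiv_zpow n hw]
        · rw [ContinuousLinearMap.norm_smulRight_apply, norm_zpow, Real.rpow_intCast]
          gcongr
          exact norm_fderiv_norm_rpow_le_of_ne_zero a hw
    _ = _ := by
        have e₁ : ‖w‖ ^ a * ‖w‖ ^ ((n : ℝ) - 1) = ‖w‖ ^ (a + n - 1) := by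
          rw [← Real.rpow_add hw0]; ring_nf
        have e₂ : ‖w‖ ^ (a - 1) * ‖w‖ ^ (n : ℝ) = ‖w‖ ^ (a + n - 1) := by
          rw [← Real.rpow_add hw0]; ring_nf
        linear_combination |(n : ℝ)| * e₁ + |a| * e₂

theorem norm_normRpowZpow_add_sub_le_of_norm_le_half {z h : ℂ} (hz : z ≠ 0)
    (hh : ‖h‖ ≤ ‖z‖ / 2) :
    ‖normRpowZpow a n (z + h) - normRpowZpow a n z‖ ≤
      (|a| + |(n : ℝ)|) * 2 ^ |a + n - 1| * ‖z‖ ^ (a + n - 1) * ‖h‖ := by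
  have hz0 : 0 < ‖z‖ := norm_pos_iff.mpr hz
  have hball : ∀ x ∈ Metric.closedBall z ‖h‖, ‖z‖ / 2 ≤ ‖x‖ ∧ ‖x‖ ≤ 2 * ‖z‖ := by
    intro x hx
    rw [Metric.mem_closedBall, dist_eq_norm] at hx
    constructor
    · linarith [norm_sub_norm_le z x, norm_sub_rev z x]
    · linarith [norm_le_norm_add_norm_sub' x z]
  have hne : ∀ x ∈ Metric.closedBall z ‖h‖, x ≠ 0 := fun x hx =>
    norm_pos_iff.mp (by linarith [(hball x hx).1])
  have hderiv : ∀ x ∈ Metric.closedBall z ‖h‖, ‖fderiv ℝ (normRpowZpow a n) x‖ ≤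
      (|a| + |(n : ℝ)|) * 2 ^ |a + n - 1| * ‖z‖ ^ (a + n - 1) := fun x hx =>
    calc _ ≤ (|a| + |(n : ℝ)|) * ‖x‖ ^ (a + n - 1) := norm_fderiv_normRpowZpow_le a n (hne x hx)
      _ ≤ _ := by
        rw [mul_assoc]
        gcongr
        exact rpow_le_two_rpow_abs_mul_rpow hz0 (hball x hx).1 (hball x hx).2 _
  have hmvt := (convex_closedBall z ‖h‖).norm_image_sub_le_of_norm_fderiv_le
    (fun x hx => differentiableAt_normRpowZpow a n (hne x hx)) hderiv
    (Metric.mem_closedBall_self (norm_nonneg h))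
    (by rw [Metric.mem_closedBall, dist_eq_norm, add_sub_cancel_left])
  rwa [add_sub_cancel_left] at hmvt

theorem norm_normRpowZpow_add_sub_le_of_half_lt_norm {z h : ℂ} (hz : z ≠ 0) (hzh : z + h ≠ 0)
    (hh : ‖z‖ / 2 < ‖h‖) {β : ℝ} (hβ₀ : 0 ≤ β) (hβ₁ : β ≤ 1) :
    ‖normRpowZpow a n (z + h) - normRpowZpow a n z‖ ≤
      3 * ‖h‖ ^ β * (‖z + h‖ ^ (a + n - β) + ‖z‖ ^ (a + n - β)) := by
  calc _ ≤ ‖normRpowZpow a n (z + h)‖ + ‖normRpowZpow a n z‖ := norm_sub_le _ _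
    _ = ‖z + h‖ ^ (a + n) + ‖z‖ ^ (a + n) := by
        rw [norm_normRpowZpow a n hzh, norm_normRpowZpow a n hz]
    _ ≤ 3 * ‖h‖ ^ β * ‖z + h‖ ^ (a + n - β) + 3 * ‖h‖ ^ β * ‖z‖ ^ (a + n - β) := by
        gcongr
        · exact rpow_le_mul_rpow_mul_rpow_sub (norm_pos_iff.mpr hzh) (by norm_num)
            (by linarith [norm_add_le z h, norm_nonneg h]) hβ₀ hβ₁ _
        · exact rpow_le_mul_rpow_mul_rpow_sub (norm_pos_iff.mpr hz) (by norm_num)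
            (by linarith [norm_nonneg h]) hβ₀ hβ₁ _
    _ = _ := by ring

end

/-- (Precise Hölder bound.) Let `α ∈ ℝ`, `0 ≤ β ≤ 1`, and
`α₁ + α₂ = α` with `α₂ ∈ ℤ`. Then there is `C = C(α, β) > 0` such that for every
`(z, h) ∈ ℂ²` with `z ≠ 0` and `z + h ≠ 0` (so that all displayed powers are defined),
`| |z+h|^{α₁}(z+h)^{α₂} - |z|^{α₁} z^{α₂} | ≤ C |h|^β (|z+h|^{α-β} + |z|^{α-β})`. -/
theorem precise_holder_bound
    (α β α₁ : ℝ) (α₂ : ℤ) (hβ₀ : 0 ≤ β) (hβ₁ : β ≤ 1) (hsum : α₁ + (α₂ : ℝ) = α) :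
    ∃ C : ℝ, 0 < C ∧ ∀ z h : ℂ, z ≠ 0 → z + h ≠ 0 →
      ‖((‖z + h‖ ^ α₁ : ℝ) : ℂ) * (z + h) ^ α₂ - ((‖z‖ ^ α₁ : ℝ) : ℂ) * z ^ α₂‖ ≤
        C * ‖h‖ ^ β * (‖z + h‖ ^ (α - β) + ‖z‖ ^ (α - β)) := by
  subst hsum
  set M := (|α₁| + |(α₂ : ℝ)|) * 2 ^ |α₁ + α₂ - 1|
  have hM : 0 ≤ M := by positivity
  refine ⟨M + 3, by positivity, fun z h hz hzh => ?_⟩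
  rcases le_or_gt ‖h‖ (‖z‖ / 2) with hnear | hfar
  · calc _ ≤ M * ‖z‖ ^ (α₁ + α₂ - 1) * ‖h‖ :=
          norm_normRpowZpow_add_sub_le_of_norm_le_half α₁ α₂ hz hnear
      _ ≤ M * (‖h‖ ^ β * ‖z‖ ^ (α₁ + α₂ - β)) := by
          rw [mul_assoc]
          exact mul_le_mul_of_nonneg_left (rpow_sub_one_mul_le_rpow_mul_rpow_sub (norm_nonneg h)
            (by linarith [norm_nonneg z]) hβ₁ _) hM
      _ = M * ‖h‖ ^ β * ‖z‖ ^ (α₁ + α₂ - β) := by ring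
      _ ≤ _ := by
          gcongr
          · linarith
          · exact le_add_of_nonneg_left (by positivity)
  · calc _ ≤ 3 * ‖h‖ ^ β * (‖z + h‖ ^ (α₁ + α₂ - β) + ‖z‖ ^ (α₁ + α₂ - β)) :=
          norm_normRpowZpow_add_sub_le_of_half_lt_norm α₁ α₂ hz hzh hfar hβ₀ hβ₁
      _ ≤ _ := by gcongr; linarith
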